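/- Let α : ℝ → ℝ be given by α(t) = t − 1, and let w : ℝ → ℝ be the measurable function defined by w(t) = 1/2 for all t ≥ 0 and w(t) = (m+1)/m for t ∈ [−m, −m+1) for each m ∈ ℕ. Then the weighted composition operator T̃_{α,w} on L²(ℝ) (with Lebesgue measure), defined by T̃_{α,w}(f) = w·(f∘α), is hypercyclic on L²(ℝ) but is not topologically Cesàro hyper-transitive on L²(ℝ). -/

import Mathlib

open Filter MeasureTheory

/-- A bounded linear operator `T` on a complex normed space is *topologically Cesàro
hyper-transitive* if for every pair of nonempty open subsets `O₁, O₂` there exists a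
strictly increasing sequence `(n_k)` of (positive) natural numbers such that
`n_k⁻¹ • T^{n_k}(O₁) ∩ O₂ ≠ ∅` for all `k`. -/
def IsCesaroHyperTransitive {E : Type*} [NormedAddCommGroup E] [NormedSpace ℂ E]
    (T : E →L[ℂ] E) : Prop :=
  ∀ O₁ O₂ : Set E, IsOpen O₁ → IsOpen O₂ → O₁.Nonempty → O₂.Nonempty →
    ∃ n : ℕ → ℕ, StrictMono n ∧ (∀ k, 1 ≤ n k) ∧
      ∀ k, ∃ f ∈ O₁, ((n k : ℂ))⁻¹ • (T ^ n k) f ∈ O₂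

/-- A bounded linear operator `T` is *hypercyclic* if its set of hypercyclic vectors
(vectors with dense orbit) is dense. -/
def IsHypercyclic {E : Type*} [NormedAddCommGroup E] [NormedSpace ℂ E]
    (T : E →L[ℂ] E) : Prop :=
  Dense {f : E | Dense {y : E | ∃ n : ℕ, 1 ≤ n ∧ y = (T ^ n) f}}

open Metric Set
open scoped ENNReal Finset

/-!
Write `w(t) = e(t) · d(t - 1) / d(t)` with `e = 1/2` on `[0, ∞)`, `e = 1` on `(-∞, 0)` and
`d(t) = max 1 ⌈-t⌉`. Then `Tⁿf = Wₙ · f(· - n)` where, by telescoping,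
`Wₙ(t) = ∏_{j<n} w(t - j) = 2^{-#{j < n | j ≤ t}} · d(t - n) / d(t)`.

Since `d(t - n) ≤ d(t) + n` we get `Wₙ ≤ n + 1`, so `n⁻¹Tⁿ` maps the unit ball into a ball of
radius `2`: `T` is not Cesàro hyper-transitive. For `f, g` supported in `[-R, R]`, on the other
hand, `Wₙ(· + n) ≤ R · 2^{R-n}` on the support of `f` while `Wₙ ≥ 2^{-R-1}(n - R)/R` on the
support of `g`, so for large `n` both `Tⁿf` and the `Tⁿ`-preimage `s ↦ g(s + n) / Wₙ(s + n)` of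
`g` are small. This is topological transitivity, and Birkhoff's transitivity theorem (Baire
category) gives a dense set of hypercyclic vectors.
-/

open TopologicalSpace in
theorem dense_setOf_dense_orbit_of_forall_exists_iterate {X : Type*} [TopologicalSpace X]
    [BaireSpace X] [SecondCountableTopology X] {f : X → X} (hf : Continuous f)
    (htrans : ∀ U V : Set X, IsOpen U → IsOpen V → U.Nonempty → V.Nonempty →
      ∃ n, 1 ≤ n ∧ (U ∩ f^[n] ⁻¹' V).Nonempty) :
    Dense {x | Dense {y | ∃ n, 1 ≤ n ∧ y = f^[n] x}} := by
  have hB := isBasis_countableBasis X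
  have hdense : Dense (⋂ V ∈ countableBasis X, ⋃ n ≥ 1, f^[n] ⁻¹' V) := by
    refine dense_biInter_of_isOpen (fun V hV => ?_) (countable_countableBasis X) fun V hV => ?_
    · exact isOpen_biUnion fun n _ => (hB.isOpen hV).preimage (hf.iterate n)
    · refine dense_iff_inter_open.2 fun U hU hUne => ?_
      obtain ⟨n, hn, x, hxU, hxV⟩ :=
        htrans U V hU (hB.isOpen hV) hUne (nonempty_of_mem_countableBasis hV)
      exact ⟨x, hxU, mem_biUnion hn hxV⟩
  refine hdense.mono fun x hx => hB.dense_iff.2 fun V hV hVne => ?_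
  obtain ⟨n, hn, hxV⟩ := mem_iUnion₂.1 (mem_iInter₂.1 hx V hV)
  exact ⟨f^[n] x, hxV, n, hn, rfl⟩

theorem not_isCesaroHyperTransitive_of_norm_pow_le {E : Type*} [NormedAddCommGroup E]
    [NormedSpace ℂ E] [Nontrivial E] (T : E →L[ℂ] E) (C : ℝ)
    (hC : ∀ n : ℕ, 1 ≤ n → ‖T ^ n‖ ≤ C * n) : ¬ IsCesaroHyperTransitive T := by
  intro hT
  have hC0 : 0 ≤ C := by simpa using (norm_nonneg _).trans (hC 1 le_rfl)
  obtain ⟨g, hg⟩ := exists_norm_eq E (by positivity : 0 ≤ C + 1)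
  obtain ⟨n, -, hn, hfg⟩ := hT (ball 0 1) (ball g 1) isOpen_ball isOpen_ball
    ⟨0, mem_ball_self one_pos⟩ ⟨g, mem_ball_self one_pos⟩
  obtain ⟨f, hf, hfg⟩ := hfg 0
  have hn0 : (0 : ℝ) < n 0 := by exact_mod_cast hn 0
  have hsmall : ‖((n 0 : ℂ))⁻¹ • (T ^ n 0) f‖ ≤ C := by
    rw [mem_ball_zero_iff] at hf
    calc ‖((n 0 : ℂ))⁻¹ • (T ^ n 0) f‖ ≤ (n 0 : ℝ)⁻¹ * (C * n 0 * ‖f‖) := by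
          rw [norm_smul, norm_inv, Complex.norm_natCast]
          gcongr
          exact (T ^ n 0).le_of_opNorm_le (hC _ (hn 0)) f
      _ = C * ‖f‖ := by field_simp
      _ ≤ C := mul_le_of_le_one_right hC0 hf.le
  have hlarge := norm_sub_norm_le g (((n 0 : ℂ))⁻¹ • (T ^ n 0) f)
  rw [← dist_eq_norm, dist_comm] at hlarge
  linarith [mem_ball.1 hfg]

namespace MeasureTheory.Lp

variable {E : Type*} [NormedAddCommGroup E] {p : ℝ≥0∞}

theorem norm_le_mul_norm_of_ae_le_mul_comp_add {f g : Lp E p (volume : Measure ℝ)} {a c : ℝ}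
    (h : ∀ᵐ t, ‖f t‖ ≤ c * ‖g (t + a)‖) : ‖f‖ ≤ c * ‖g‖ := by
  have hshift := measurePreserving_add_right (volume : Measure ℝ) a
  rw [← norm_compMeasurePreserving g hshift]
  refine norm_le_mul_norm_of_ae_le_mul ?_
  filter_upwards [h, coeFn_compMeasurePreserving g hshift] with t ht hgt
  rwa [hgt]

theorem nontrivial_of_volume_real [Fact (1 ≤ p)] [Nontrivial E] :
    Nontrivial (Lp E p (volume : Measure ℝ)) := by
  obtain ⟨c, hc⟩ := exists_ne (0 : E)
  refine nontrivial_of_ne (indicatorConstLp p measurableSet_Icc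
    (by simp : volume (Icc (0 : ℝ) 1) ≠ ∞) c) 0 fun h => hc ?_
  have := norm_indicatorConstLp' (μ := (volume : Measure ℝ)) (s := Icc (0 : ℝ) 1) (c := c)
    (zero_lt_one.trans_le (Fact.out : 1 ≤ p)).ne' (by simp) (hs := measurableSet_Icc)
    (hμs := by simp)
  exact norm_eq_zero.1 (by simpa [h] using this : (0 : ℝ) = ‖c‖).symm

theorem exists_dist_lt_ae_mem_Icc [Fact (1 ≤ p)] [NormedSpace ℝ E] (hp : p ≠ ∞)
    (f : Lp E p (volume : Measure ℝ)) {ε : ℝ} (hε : 0 < ε) :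
    ∃ g : Lp E p (volume : Measure ℝ), ∃ R : ℕ, dist g f < ε ∧
      ∀ᵐ t, g t ≠ 0 → t ∈ Icc (-R : ℝ) R := by
  obtain ⟨g, hg_supp, hg_close, -, hg_mem⟩ :=
    (Lp.memLp f).exists_hasCompactSupport_eLpNorm_sub_le hp (ENNReal.ofReal_pos.2 (half_pos hε)).ne'
  obtain ⟨r, hr⟩ := hg_supp.isBounded.subset_closedBall 0
  refine ⟨hg_mem.toLp g, ⌈r⌉₊, ?_, ?_⟩
  · rw [dist_comm, Lp.dist_def]
    refine ENNReal.toReal_lt_of_lt_ofReal ?_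
    rw [eLpNorm_congr_ae ((EventuallyEq.refl _ (f : ℝ → E)).sub hg_mem.coeFn_toLp)]
    exact hg_close.trans_lt (ENNReal.ofReal_lt_ofReal_iff hε |>.2 (half_lt_self hε))
  · filter_upwards [hg_mem.coeFn_toLp] with t ht hne
    rw [ht] at hne
    have hbound := hr (subset_tsupport _ hne)
    rw [Real.closedBall_eq_Icc, zero_sub, zero_add] at hbound
    have hceil := Nat.le_ceil r
    constructor <;> linarith [hbound.1, hbound.2]

end MeasureTheory.Lp

def weightProd (w : ℝ → ℝ) (n : ℕ) (t : ℝ) : ℝ := ∏ j ∈ Finset.range n, w (t - j)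

theorem weightProd_succ (w : ℝ → ℝ) (n : ℕ) (t : ℝ) :
    weightProd w (n + 1) t = weightProd w n t * w (t - n) :=
  Finset.prod_range_succ _ _

theorem measurable_weightProd {w : ℝ → ℝ} (hw : Measurable w) (n : ℕ) :
    Measurable (weightProd w n) :=
  Finset.measurable_prod _ fun _ _ => hw.comp (measurable_id.sub_const _)

def IsTransitiveWeight (w : ℝ → ℝ) : Prop :=
  ∀ (R : ℕ) (ε : ℝ), 0 < ε → ∃ n, 1 ≤ n ∧
    (∀ s ∈ Icc (-R : ℝ) R, |weightProd w n (s + n)| ≤ ε) ∧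
    ∀ t ∈ Icc (-R : ℝ) R, ε⁻¹ ≤ |weightProd w n t|

section WeightedTranslation

variable {p : ℝ≥0∞} [Fact (1 ≤ p)]

def IsWeightedTranslation (w : ℝ → ℝ)
    (T : Lp ℂ p (volume : Measure ℝ) →L[ℂ] Lp ℂ p (volume : Measure ℝ)) : Prop :=
  ∀ f : Lp ℂ p (volume : Measure ℝ), (T f : ℝ → ℂ) =ᵐ[volume] fun t => (w t : ℂ) * f (t - 1)

namespace IsWeightedTranslation

variable {w : ℝ → ℝ} {T : Lp ℂ p (volume : Measure ℝ) →L[ℂ] Lp ℂ p (volume : Measure ℝ)}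

theorem pow_apply_ae_eq (hT : IsWeightedTranslation w T) (n : ℕ)
    (f : Lp ℂ p (volume : Measure ℝ)) :
    ((T ^ n) f : ℝ → ℂ) =ᵐ[volume] fun t => (weightProd w n t : ℂ) * f (t - n) := by
  induction n generalizing f with
  | zero => simp [weightProd]
  | succ n ih =>
    have hshift :=
      (measurePreserving_sub_right (volume : Measure ℝ) (n : ℝ)).quasiMeasurePreserving
    filter_upwards [ih (T f), hshift.ae_eq_comp (hT f)] with t hTn hTf
    rw [pow_succ, mul_apply_eq_comp, hTn, weightProd_succ]
    simp only [Function.comp_apply] at hTf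
    rw [hTf]
    push_cast
    ring_nf

theorem norm_pow_apply_le (hT : IsWeightedTranslation w T) {n : ℕ} {c : ℝ}
    {f : Lp ℂ p (volume : Measure ℝ)} (hf : ∀ᵐ s, f s ≠ 0 → |weightProd w n (s + n)| ≤ c) :
    ‖(T ^ n) f‖ ≤ c * ‖f‖ := by
  have hshift := (measurePreserving_sub_right (volume : Measure ℝ) (n : ℝ)).quasiMeasurePreserving
  refine Lp.norm_le_mul_norm_of_ae_le_mul_comp_add (a := -(n : ℝ)) ?_
  filter_upwards [hT.pow_apply_ae_eq n f, hshift.ae hf] with t hTn hbound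
  rw [hTn, norm_mul, Complex.norm_real, Real.norm_eq_abs, ← sub_eq_add_neg]
  by_cases hzero : f (t - n) = 0
  · simp [hzero]
  · simpa [hzero] using mul_le_mul_of_nonneg_right (hbound hzero) (norm_nonneg (f (t - n)))

theorem norm_pow_le (hT : IsWeightedTranslation w T) {n : ℕ} {c : ℝ} (hc : 0 ≤ c)
    (h : ∀ t, |weightProd w n t| ≤ c) : ‖T ^ n‖ ≤ c :=
  ContinuousLinearMap.opNorm_le_bound _ hc fun _ =>
    hT.norm_pow_apply_le (ae_of_all _ fun _ _ => h _)

theorem exists_pow_apply_eq (hT : IsWeightedTranslation w T) (hw : Measurable w) {n : ℕ}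
    {c : ℝ} (hc : 0 < c) {g : Lp ℂ p (volume : Measure ℝ)}
    (hg : ∀ᵐ t, g t ≠ 0 → c⁻¹ ≤ |weightProd w n t|) :
    ∃ f : Lp ℂ p (volume : Measure ℝ), (T ^ n) f = g ∧ ‖f‖ ≤ c * ‖g‖ := by
  have hplus := measurePreserving_add_right (volume : Measure ℝ) (n : ℝ)
  set φ : ℝ → ℂ := fun s => (weightProd w n (s + n) : ℂ)⁻¹ * g (s + n) with hφ_def
  have hφ_le : ∀ᵐ s, ‖φ s‖ ≤ c * ‖g (s + n)‖ := by
    filter_upwards [hplus.quasiMeasurePreserving.ae hg] with s hs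
    by_cases hzero : g (s + n) = 0
    · simp [φ, hzero]
    · rw [norm_mul, norm_inv, Complex.norm_real, Real.norm_eq_abs]
      gcongr
      exact inv_le_of_inv_le₀ hc (hs hzero)
  have hφ_meas : AEStronglyMeasurable φ volume :=
    (Complex.measurable_ofReal.comp ((measurable_weightProd hw n).comp
      (measurable_add_const _))).inv.aestronglyMeasurable.mul
      ((Lp.aestronglyMeasurable g).comp_measurePreserving hplus)
  have hφ : MemLp φ p volume :=
    ((Lp.memLp g).comp_measurePreserving hplus).of_le_mul hφ_meas hφ_le
  refine ⟨hφ.toLp φ, ?_, ?_⟩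
  · have hminus :=
      (measurePreserving_sub_right (volume : Measure ℝ) (n : ℝ)).quasiMeasurePreserving
    refine Lp.ext ?_
    filter_upwards [hT.pow_apply_ae_eq n _, hminus.ae_eq_comp hφ.coeFn_toLp, hg]
      with t hTn hφt hgt
    simp only [Function.comp_apply] at hφt
    rw [hTn, hφt, hφ_def]
    simp only [sub_add_cancel]
    by_cases hzero : g t = 0
    · simp [hzero]
    · have hW : weightProd w n t ≠ 0 :=
        abs_pos.1 ((inv_pos.2 hc).trans_le (hgt hzero))
      rw [← mul_assoc, mul_inv_cancel₀ (Complex.ofReal_ne_zero.2 hW), one_mul]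
  · refine Lp.norm_le_mul_norm_of_ae_le_mul_comp_add (a := (n : ℝ)) ?_
    filter_upwards [hφ.coeFn_toLp, hφ_le] with s hs hle
    rwa [hs]

theorem exists_pow_apply_mem_ball (hT : IsWeightedTranslation w T) (hw : Measurable w)
    (hw_trans : IsTransitiveWeight w) (hp : p ≠ ∞)
    (f₀ g₀ : Lp ℂ p (volume : Measure ℝ)) {ε : ℝ} (hε : 0 < ε) :
    ∃ n, 1 ≤ n ∧ ∃ f ∈ ball f₀ ε, (T ^ n) f ∈ ball g₀ ε := by
  obtain ⟨f, R₁, hf, hf_supp⟩ := Lp.exists_dist_lt_ae_mem_Icc hp f₀ (half_pos hε)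
  obtain ⟨g, R₂, hg, hg_supp⟩ := Lp.exists_dist_lt_ae_mem_Icc hp g₀ (half_pos hε)
  have hIcc : ∀ R ≤ max R₁ R₂, Icc (-R : ℝ) R ⊆ Icc (-(max R₁ R₂ : ℕ) : ℝ) (max R₁ R₂ : ℕ) :=
    fun R hR => Icc_subset_Icc (neg_le_neg (Nat.cast_le.2 hR)) (Nat.cast_le.2 hR)
  set η := ε / (2 * (‖f‖ + ‖g‖ + 1))
  have hη : 0 < η := by positivity
  have hη_mul : ∀ x, x ≤ ‖f‖ + ‖g‖ + 1 → η * x ≤ ε / 2 := fun x hx => by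
    calc η * x ≤ η * (‖f‖ + ‖g‖ + 1) := by gcongr
      _ = ε / 2 := by simp only [η]; field_simp
  obtain ⟨n, hn, hfwd, hbwd⟩ := hw_trans (max R₁ R₂) η hη
  have hTf : ‖(T ^ n) f‖ ≤ η * ‖f‖ := hT.norm_pow_apply_le <| by
    filter_upwards [hf_supp] with s hs hne using hfwd s (hIcc R₁ (le_max_left _ _) (hs hne))
  obtain ⟨u, hu, hu_le⟩ := hT.exists_pow_apply_eq hw hη (g := g) <| by
    filter_upwards [hg_supp] with t ht hne using hbwd t (hIcc R₂ (le_max_right _ _) (ht hne))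
  refine ⟨n, hn, f + u, ?_, ?_⟩
  · calc dist (f + u) f₀ ≤ dist (f + u) f + dist f f₀ := dist_triangle _ _ _
      _ = ‖u‖ + dist f f₀ := by rw [dist_self_add_left]
      _ < ε / 2 + ε / 2 := add_lt_add_of_le_of_lt
          (hu_le.trans (hη_mul _ (by linarith [norm_nonneg f]))) hf
      _ = ε := add_halves ε
  · calc dist ((T ^ n) (f + u)) g₀ ≤ dist (g + (T ^ n) f) g + dist g g₀ := by
          rw [map_add, hu, add_comm]
          exact dist_triangle _ _ _
      _ = ‖(T ^ n) f‖ + dist g g₀ := by rw [dist_self_add_left]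
      _ < ε / 2 + ε / 2 := add_lt_add_of_le_of_lt
          (hTf.trans (hη_mul _ (by linarith [norm_nonneg g]))) hg
      _ = ε := add_halves ε

theorem isHypercyclic (hT : IsWeightedTranslation w T) (hw : Measurable w) [Fact (p ≠ ∞)]
    (hw_trans : IsTransitiveWeight w) :
    IsHypercyclic T := by
  have : SecondCountableTopology (Lp ℂ p (volume : Measure ℝ)) := Lp.SecondCountableTopology
  simp only [IsHypercyclic, FunLike.coe_pow_eq_iterate]
  refine dense_setOf_dense_orbit_of_forall_exists_iterate T.continuous
    fun U V hU hV ⟨f₀, hf₀⟩ ⟨g₀, hg₀⟩ => ?_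
  obtain ⟨ε, hε, hεU⟩ := Metric.isOpen_iff.1 hU f₀ hf₀
  obtain ⟨δ, hδ, hδV⟩ := Metric.isOpen_iff.1 hV g₀ hg₀
  obtain ⟨n, hn, f, hf, hTf⟩ :=
    hT.exists_pow_apply_mem_ball hw hw_trans Fact.out f₀ g₀ (lt_min hε hδ)
  rw [FunLike.coe_pow_eq_iterate] at hTf
  exact ⟨n, hn, f, hεU (ball_subset_ball (min_le_left _ _) hf),
    hδV (ball_subset_ball (min_le_right _ _) hTf)⟩

end IsWeightedTranslation

end WeightedTranslation

noncomputable section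

namespace CesaroCounterexample

def depth (t : ℝ) : ℕ := max 1 ⌈-t⌉₊

def decay (t : ℝ) : ℝ := if 0 ≤ t then 1 / 2 else 1

def weight (t : ℝ) : ℝ := decay t * (depth (t - 1) / depth t)

theorem one_le_depth (t : ℝ) : 1 ≤ depth t := le_max_left _ _

theorem depth_pos (t : ℝ) : (0 : ℝ) < depth t := by
  exact_mod_cast one_le_depth t

theorem neg_le_depth (t : ℝ) : -t ≤ depth t :=
  (Nat.le_ceil _).trans (Nat.cast_le.2 (le_max_right _ _))

theorem depth_le {R : ℕ} (hR : 1 ≤ R) {t : ℝ} (ht : -(R : ℝ) ≤ t) : depth t ≤ R :=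
  max_le hR (Nat.ceil_le.2 (by linarith))

theorem depth_of_neg {t : ℝ} (ht : t < 0) : depth t = ⌈-t⌉₊ :=
  max_eq_right (Nat.one_le_iff_ne_zero.2 (Nat.ceil_pos.2 (by linarith)).ne')

theorem depth_of_neg_one_le {t : ℝ} (ht : -1 ≤ t) : depth t = 1 :=
  max_eq_left (Nat.ceil_le.2 (by push_cast; linarith))

theorem depth_sub_one_of_neg {t : ℝ} (ht : t < 0) : depth (t - 1) = depth t + 1 := by
  rw [depth_of_neg ht, depth_of_neg (by linarith), neg_sub', sub_neg_eq_add,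
    Nat.ceil_add_one (by linarith)]

theorem depth_sub_one_le (t : ℝ) : depth (t - 1) ≤ depth t + 1 := by
  rcases lt_or_ge t 0 with ht | ht
  · exact (depth_sub_one_of_neg ht).le
  · rw [depth_of_neg_one_le (by linarith : -1 ≤ t - 1)]
    omega

theorem depth_sub_nat_le (t : ℝ) (n : ℕ) : depth (t - n) ≤ depth t + n := by
  induction n with
  | zero => simp
  | succ n ih =>
    have := depth_sub_one_le (t - n)
    rw [Nat.cast_succ, ← sub_sub]
    omega

theorem weight_of_nonneg {t : ℝ} (ht : 0 ≤ t) : weight t = 1 / 2 := by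
  simp [weight, decay, ht, depth_of_neg_one_le (by linarith : -1 ≤ t),
    depth_of_neg_one_le (by linarith : -1 ≤ t - 1)]

theorem weight_of_neg {t : ℝ} (ht : t < 0) :
    weight t = ((⌈-t⌉₊ : ℝ) + 1) / ⌈-t⌉₊ := by
  simp [weight, decay, not_le.2 ht, depth_sub_one_of_neg ht, depth_of_neg ht]

theorem eq_weight {w : ℝ → ℝ} (hw_nonneg : ∀ t : ℝ, 0 ≤ t → w t = 1 / 2)
    (hw_neg : ∀ m : ℕ, 1 ≤ m → ∀ t : ℝ, -(m : ℝ) ≤ t → t < -(m : ℝ) + 1 →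
      w t = ((m : ℝ) + 1) / (m : ℝ)) : w = weight := by
  funext t
  rcases le_or_gt 0 t with ht | ht
  · rw [hw_nonneg t ht, weight_of_nonneg ht]
  · rw [weight_of_neg ht]
    refine hw_neg _ (Nat.one_le_iff_ne_zero.2 (Nat.ceil_pos.2 (by linarith)).ne') t
      (by linarith [Nat.le_ceil (-t)]) (by linarith [Nat.ceil_lt_add_one (by linarith : 0 ≤ -t)])

theorem measurable_weight : Measurable weight := by
  have hdepth : Measurable fun t => (depth t : ℝ) :=
    measurable_from_top.comp (measurable_const.max (Nat.measurable_ceil.comp measurable_neg))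
  have hdecay : Measurable decay :=
    Measurable.ite (measurableSet_le measurable_const measurable_id) measurable_const
      measurable_const
  exact hdecay.mul ((hdepth.comp (measurable_id.sub_const 1)).div hdepth)

theorem prod_decay (n : ℕ) (t : ℝ) :
    ∏ j ∈ Finset.range n, decay (t - j) =
      (1 / 2) ^ #{j ∈ Finset.range n | ((j : ℕ) : ℝ) ≤ t} := by
  simp [decay, Finset.prod_ite, sub_nonneg]

theorem prod_depth_ratio (n : ℕ) (t : ℝ) :
    ∏ j ∈ Finset.range n, ((depth (t - j - 1) : ℝ) / depth (t - j)) = depth (t - n) / depth t := by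
  refine Finset.prod_range_induction _ (fun n => (depth (t - n) : ℝ) / depth t)
    (by simp [(depth_pos t).ne']) n fun k _ => ?_
  have := (depth_pos (t - k)).ne'
  rw [Nat.cast_succ, ← sub_sub]
  field_simp

theorem weightProd_weight (n : ℕ) (t : ℝ) :
    weightProd weight n t =
      (1 / 2) ^ #{j ∈ Finset.range n | ((j : ℕ) : ℝ) ≤ t} * (depth (t - n) / depth t) := by
  rw [← prod_decay, ← prod_depth_ratio, ← Finset.prod_mul_distrib]
  rfl

theorem weightProd_weight_nonneg (n : ℕ) (t : ℝ) : 0 ≤ weightProd weight n t := by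
  rw [weightProd_weight]
  positivity

theorem abs_weightProd_weight_le (n : ℕ) (t : ℝ) : |weightProd weight n t| ≤ n + 1 := by
  have hdepth : (1 : ℝ) ≤ depth t := by exact_mod_cast one_le_depth t
  have hshift : (depth (t - n) : ℝ) ≤ depth t + n := by exact_mod_cast depth_sub_nat_le t n
  rw [abs_of_nonneg (weightProd_weight_nonneg n t), weightProd_weight]
  calc _ ≤ 1 * (((depth t : ℝ) + n) / depth t) := by
        gcongr
        exact pow_le_one₀ (by norm_num) (by norm_num)
    _ = 1 + n / (depth t : ℝ) := by field_simp
    _ ≤ n + 1 := by linarith [div_le_self (Nat.cast_nonneg (α := ℝ) n) hdepth]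

theorem weightProd_weight_add_le {R : ℕ} (hR : 1 ≤ R) {s : ℝ} (hs : -(R : ℝ) ≤ s) {n : ℕ}
    (hn : R ≤ n) : weightProd weight n (s + n) ≤ (1 / 2) ^ (n - R) * R := by
  have hcount : n - R ≤ #{j ∈ Finset.range n | ((j : ℕ) : ℝ) ≤ s + n} := by
    calc n - R = #(Finset.range (n - R)) := (Finset.card_range _).symm
      _ ≤ _ := Finset.card_le_card fun j hj => by
        have hj' : j + R < n := by simp only [Finset.mem_range] at hj; omega
        have hj'' : (j : ℝ) + R < n := by exact_mod_cast hj'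
        simp only [Finset.mem_filter, Finset.mem_range]
        exact ⟨by omega, by linarith⟩
  have hratio : (depth s : ℝ) / depth (s + n) ≤ R :=
    (div_le_self (Nat.cast_nonneg _) (by exact_mod_cast one_le_depth _)).trans
      (by exact_mod_cast depth_le hR hs)
  rw [weightProd_weight, add_sub_cancel_right]
  exact mul_le_mul (pow_le_pow_of_le_one (by norm_num) (by norm_num) hcount) hratio
    (by positivity) (by positivity)

theorem le_weightProd_weight {R : ℕ} (hR : 1 ≤ R) {t : ℝ} (ht : t ∈ Icc (-(R : ℝ)) R) {n : ℕ}
    (hn : R ≤ n) : (1 / 2) ^ (R + 1) * ((n - R) / R) ≤ weightProd weight n t := by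
  have hcount : #{j ∈ Finset.range n | ((j : ℕ) : ℝ) ≤ t} ≤ R + 1 := by
    calc _ ≤ #(Finset.range (R + 1)) := Finset.card_le_card fun j hj => by
          simp only [Finset.mem_filter, Finset.mem_range] at hj ⊢
          have : (j : ℝ) ≤ R := hj.2.trans ht.2
          exact Nat.lt_succ_of_le (by exact_mod_cast this)
      _ = R + 1 := Finset.card_range _
  have hratio : ((n : ℝ) - R) / R ≤ depth (t - n) / depth t :=
    div_le_div₀ (Nat.cast_nonneg _) (by linarith [neg_le_depth (t - n), ht.2]) (depth_pos t)
      (by exact_mod_cast depth_le hR ht.1)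
  rw [weightProd_weight]
  exact mul_le_mul (pow_le_pow_of_le_one (by norm_num) (by norm_num) hcount) hratio
    (div_nonneg (sub_nonneg.2 (Nat.cast_le.2 hn)) (Nat.cast_nonneg _)) (by positivity)

theorem isTransitiveWeight_weight : IsTransitiveWeight weight := by
  intro R ε hε
  set R' := R + 1
  have hR' : (0 : ℝ) < R' := by positivity
  have hIcc : Icc (-R : ℝ) R ⊆ Icc (-R' : ℝ) R' :=
    Icc_subset_Icc (by simp [R']) (by simp [R'])
  have hsmall : ∀ᶠ n : ℕ in atTop, (1 / 2 : ℝ) ^ (n - R') * R' < ε := by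
    have := ((tendsto_pow_atTop_nhds_zero_of_lt_one (by norm_num : (0 : ℝ) ≤ 1 / 2)
      (by norm_num)).comp (tendsto_sub_atTop_nat R')).mul_const (R' : ℝ)
    rw [zero_mul] at this
    exact this.eventually_lt_const hε
  have hlarge : ∀ᶠ n : ℕ in atTop, ε⁻¹ ≤ (1 / 2 : ℝ) ^ (R' + 1) * ((n - R') / R') :=
    (((tendsto_atTop_add_const_right _ (-(R' : ℝ)) tendsto_natCast_atTop_atTop).atTop_div_const
      hR').const_mul_atTop (by positivity)).eventually_ge_atTop _
  obtain ⟨n, hn, hs, ht⟩ := ((eventually_ge_atTop R').and (hsmall.and hlarge)).exists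
  refine ⟨n, by omega, fun s hsR => ?_, fun t htR => ?_⟩
  · rw [abs_of_nonneg (weightProd_weight_nonneg _ _)]
    exact (weightProd_weight_add_le (by omega) (hIcc hsR).1 hn).trans hs.le
  · rw [abs_of_nonneg (weightProd_weight_nonneg _ _)]
    exact ht.trans (le_weightProd_weight (by omega) (hIcc htR) hn)

end CesaroCounterexample

end

theorem hypercyclic_not_cesaro_on_L2
    (w : ℝ → ℝ)
    (hw_nonneg : ∀ t : ℝ, 0 ≤ t → w t = 1 / 2)
    (hw_neg : ∀ m : ℕ, 1 ≤ m → ∀ t : ℝ, -(m : ℝ) ≤ t → t < -(m : ℝ) + 1 →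
      w t = ((m : ℝ) + 1) / (m : ℝ))
    (T : Lp ℂ 2 (volume : Measure ℝ) →L[ℂ] Lp ℂ 2 (volume : Measure ℝ))
    (hT : ∀ f : Lp ℂ 2 (volume : Measure ℝ),
      (T f : ℝ → ℂ) =ᵐ[volume] fun t => (w t : ℂ) * f (t - 1)) :
    IsHypercyclic T ∧ ¬ IsCesaroHyperTransitive T := by
  obtain rfl : w = CesaroCounterexample.weight := CesaroCounterexample.eq_weight hw_nonneg hw_neg
  have hT : IsWeightedTranslation CesaroCounterexample.weight T := hT
  have : Nontrivial (Lp ℂ 2 (volume : Measure ℝ)) := Lp.nontrivial_of_volume_real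
  have : Fact ((2 : ℝ≥0∞) ≠ ∞) := ⟨ENNReal.ofNat_ne_top⟩
  refine ⟨hT.isHypercyclic CesaroCounterexample.measurable_weight
    CesaroCounterexample.isTransitiveWeight_weight,
    not_isCesaroHyperTransitive_of_norm_pow_le T 2 fun n hn => ?_⟩
  have hn : (1 : ℝ) ≤ n := by exact_mod_cast hn
  calc ‖T ^ n‖ ≤ n + 1 :=
        hT.norm_pow_le (by positivity) (CesaroCounterexample.abs_weightProd_weight_le n)
    _ ≤ 2 * n := by linarith
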